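/- arXiv:1312.0069 — 7 statements merged into one kernel-verified Lean document; each statement's English description precedes it below -/
import Mathlib

section
/- Let d ≥ 1 and let σ be a skew bicharacter of ℤ^d. For all f, g ∈ ℓ¹(ℤ^d): the series ρ_σ(f) = ∑_{n∈ℤ^d} f(n) U_σ^n converges in operator norm on ℓ²(ℤ^d) with ‖ρ_σ(f)‖ ≤ ‖f‖₁; ρ_σ(f ⋆_σ g) = ρ_σ(f) ∘ ρ_σ(g); and ρ_σ(f*) = ρ_σ(f)*, where ρ_σ(f)* is the Hilbert space adjoint. -/
noncomputable section

/-- `ℤ^d`. -/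
abbrev Zd (d : ℕ) := Fin d → ℤ

/-- `ℓ²(ℤ^d)` with complex coefficients. -/
abbrev Hilb (d : ℕ) := lp (fun _ : Zd d => ℂ) 2

/-- `ℓ¹(ℤ^d)` with complex coefficients. -/
abbrev L1 (d : ℕ) := lp (fun _ : Zd d => ℂ) 1

/-- The canonical Hilbert basis vector `e_n` of `ℓ²(ℤ^d)`. -/
def eVec (d : ℕ) (n : Zd d) : Hilb d := lp.single 2 n 1

/-- A skew bicharacter of `ℤ^d`. -/
def IsSkewBichar (d : ℕ) (σ : Zd d → Zd d → ℂ) : Prop :=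
  (∀ x y, ‖σ x y‖ = 1) ∧
  (∀ x x' y, σ (x + x') y = σ x y * σ x' y) ∧
  (∀ x y y', σ x (y + y') = σ x y * σ x y') ∧
  (∀ x y, σ y x = starRingEnd ℂ (σ x y)) ∧
  (∀ x, σ x x = 1)

/-!
Each `U_σ^n` is unitary. Its adjoint is `U_σ^{-n}` (substitute `k ↦ k + n` in `⟪U_σ^{-n} x, y⟫`),
and `U_σ^a U_σ^b = σ(a,b) U_σ^{a+b}`, so `(U_σ^n)* U_σ^n = σ(-n,n) U_σ^0 = 1` and the C*-identity
gives `‖U_σ^n‖ ≤ 1`. Hence `∑ f(n) U_σ^n` converges absolutely with norm at most `‖f‖₁`.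
Multiplying two such series, the absolutely convergent double series regroups along `m + n = k`,
and `σ(m, k - m) = σ(m, k)` turns its coefficients into the twisted convolution. Taking adjoints
termwise and substituting `n ↦ -n` gives `f*`.
-/

open ContinuousLinearMap

namespace IsSkewBichar

variable {d : ℕ} {σ : Zd d → Zd d → ℂ}

lemma ne_zero (hσ : IsSkewBichar d σ) (x y : Zd d) : σ x y ≠ 0 := by
  rw [← norm_ne_zero_iff, hσ.1]
  exact one_ne_zero

lemma map_zero_left (hσ : IsSkewBichar d σ) (y : Zd d) : σ 0 y = 1 := by
  have h := hσ.2.1 0 0 y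
  rw [add_zero] at h
  exact (mul_eq_left₀ (hσ.ne_zero 0 y)).1 h.symm

lemma map_zero_right (hσ : IsSkewBichar d σ) (x : Zd d) : σ x 0 = 1 := by
  rw [hσ.2.2.2.1, hσ.map_zero_left, map_one]

lemma map_neg_left (hσ : IsSkewBichar d σ) (x y : Zd d) :
    σ (-x) y = starRingEnd ℂ (σ x y) := by
  have h := hσ.2.1 x (-x) y
  rw [add_neg_cancel, hσ.map_zero_left] at h
  refine mul_left_cancel₀ (hσ.ne_zero x y) ?_
  rw [← h, RCLike.mul_conj, hσ.1]
  simp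

lemma map_neg_right (hσ : IsSkewBichar d σ) (x y : Zd d) :
    σ x (-y) = starRingEnd ℂ (σ x y) := by
  rw [hσ.2.2.2.1 (-y) x, hσ.map_neg_left, Complex.conj_conj, hσ.2.2.2.1]

lemma map_sub_self_right (hσ : IsSkewBichar d σ) (x y : Zd d) : σ x (y - x) = σ x y := by
  rw [sub_eq_add_neg, hσ.2.2.1, hσ.map_neg_right, hσ.2.2.2.2, map_one, mul_one]

lemma map_sub_left (hσ : IsSkewBichar d σ) (x y z : Zd d) :
    σ (x - y) z = σ x z * σ z y := by
  rw [sub_eq_add_neg, hσ.2.1, hσ.map_neg_left, ← hσ.2.2.2.1]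

end IsSkewBichar

section Basis

variable {d : ℕ}

lemma eVec_apply (n k : Zd d) : (eVec d n : Zd d → ℂ) k = if k = n then 1 else 0 := by
  rw [eVec, lp.single_apply, Pi.single_apply]

lemma hasSum_eVec (x : Hilb d) : HasSum (fun m => (x : Zd d → ℂ) m • eVec d m) x := by
  simpa [eVec, ← lp.single_smul] using
    lp.hasSum_single (E := fun _ : Zd d => ℂ) ENNReal.ofNat_ne_top x

lemma inner_eVec_left (k : Zd d) (x : Hilb d) : inner ℂ (eVec d k) x = (x : Zd d → ℂ) k := by
  simpa [eVec] using lp.inner_single_left (𝕜 := ℂ) (G := fun _ : Zd d => ℂ) k (1 : ℂ) x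

lemma ext_eVec {A B : Hilb d →L[ℂ] Hilb d} (h : ∀ m, A (eVec d m) = B (eVec d m)) : A = B := by
  ext x : 1
  refine ((hasSum_eVec x).mapL A).unique ?_
  simpa only [map_smul, h] using (hasSum_eVec x).mapL B

end Basis

section TwistedShift

variable {d : ℕ} {σ : Zd d → Zd d → ℂ} {U : Zd d → Hilb d →L[ℂ] Hilb d}

lemma twistedShift_apply_apply (hσ : IsSkewBichar d σ)
    (hU : ∀ n m, U n (eVec d m) = σ m n • eVec d (m - n)) (n : Zd d) (x : Hilb d) (k : Zd d) :
    (U n x : Zd d → ℂ) k = σ k n * (x : Zd d → ℂ) (k + n) := by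
  have h := ((hasSum_eVec x).mapL (U n)).mapL (innerSL ℂ (eVec d k))
  simp only [map_smul, hU, innerSL_apply_apply, inner_eVec_left, eVec_apply, smul_eq_mul] at h
  refine h.unique ((hasSum_single (k + n) fun m hm => ?_).trans ?_)
  · simp [eq_sub_iff_add_eq, hm.symm]
  · simp [hσ.2.1, hσ.2.2.2.2, mul_comm]

lemma star_twistedShift (hσ : IsSkewBichar d σ)
    (hU : ∀ n m, U n (eVec d m) = σ m n • eVec d (m - n)) (n : Zd d) : star (U n) = U (-n) := by
  rw [star_eq_adjoint, eq_comm, eq_adjoint_iff]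
  intro x y
  rw [lp.inner_eq_tsum, lp.inner_eq_tsum, ← (Equiv.addRight n).tsum_eq]
  refine tsum_congr fun k => ?_
  simp only [Equiv.coe_addRight, RCLike.inner_apply', twistedShift_apply_apply hσ hU,
    add_neg_cancel_right, hσ.map_neg_right, hσ.2.1, hσ.2.2.2.2, map_mul, Complex.conj_conj]
  ring

lemma twistedShift_mul (hσ : IsSkewBichar d σ)
    (hU : ∀ n m, U n (eVec d m) = σ m n • eVec d (m - n)) (a b : Zd d) :
    U a * U b = σ a b • U (a + b) := by
  refine ext_eVec fun m => ?_
  rw [mul_apply_eq_comp, smul_apply, hU, map_smul, hU, hU, smul_smul, smul_smul, sub_sub,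
    add_comm b, hσ.map_sub_left, hσ.2.2.1]
  congr 1
  ring

lemma twistedShift_zero (hσ : IsSkewBichar d σ)
    (hU : ∀ n m, U n (eVec d m) = σ m n • eVec d (m - n)) : U 0 = 1 :=
  ext_eVec fun m => by rw [hU, hσ.map_zero_right, one_smul, sub_zero, one_apply_eq_self]

lemma norm_twistedShift_le_one (hσ : IsSkewBichar d σ)
    (hU : ∀ n m, U n (eVec d m) = σ m n • eVec d (m - n)) (n : Zd d) : ‖U n‖ ≤ 1 := by
  have hunitary : star (U n) * U n = 1 := by
    rw [star_twistedShift hσ hU, twistedShift_mul hσ hU, neg_add_cancel, twistedShift_zero hσ hU,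
      hσ.map_neg_left, hσ.2.2.2.2, map_one, one_smul]
  have hsq : ‖U n‖ * ‖U n‖ ≤ 1 := by
    rw [← CStarRing.norm_star_mul_self, hunitary, one_def]
    exact norm_id_le
  nlinarith [norm_nonneg (U n)]

end TwistedShift

section AbsolutelyConvergentSeries

lemma lp.summable_norm_of_one {α : Type*} {E : α → Type*} [∀ i, NormedAddCommGroup (E i)]
    (f : lp E 1) : Summable fun i => ‖f i‖ := by
  simpa using (lp.memℓp f).summable one_pos

lemma lp.norm_eq_tsum_norm_of_one {α : Type*} {E : α → Type*} [∀ i, NormedAddCommGroup (E i)]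
    (f : lp E 1) : ‖f‖ = ∑' i, ‖f i‖ := by
  simpa using lp.norm_eq_tsum_rpow one_pos f

variable {ι A : Type*}

lemma norm_smul_le_of_norm_le_one [SeminormedAddCommGroup A] [NormedSpace ℂ A] (c : ℂ) {a : A}
    (ha : ‖a‖ ≤ 1) : ‖c • a‖ ≤ ‖c‖ :=
  (norm_smul_le c a).trans (mul_le_of_le_one_right (norm_nonneg c) ha)

lemma summable_norm_smul_of_norm_le_one [SeminormedAddCommGroup A] [NormedSpace ℂ A]
    {u : ι → A} {f : ι → ℂ} (hu : ∀ n, ‖u n‖ ≤ 1) (hf : Summable fun n => ‖f n‖) :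
    Summable fun n => ‖f n • u n‖ :=
  hf.of_nonneg_of_le (fun _ => norm_nonneg _) fun n => norm_smul_le_of_norm_le_one _ (hu n)

lemma norm_tsum_smul_le_of_norm_le_one [SeminormedAddCommGroup A] [NormedSpace ℂ A]
    {u : ι → A} {f : ι → ℂ} (hu : ∀ n, ‖u n‖ ≤ 1) (hf : Summable fun n => ‖f n‖) :
    ‖∑' n, f n • u n‖ ≤ ∑' n, ‖f n‖ :=
  (norm_tsum_le_tsum_norm (summable_norm_smul_of_norm_le_one hu hf)).trans <|
    (summable_norm_smul_of_norm_le_one hu hf).tsum_le_tsum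
      (fun n => norm_smul_le_of_norm_le_one _ (hu n)) hf

theorem hasSum_twistedConvolution_smul {G : Type*} [AddCommGroup G] [NormedRing A]
    [NormedAlgebra ℂ A] [CompleteSpace A] {u : G → A} {c : G → G → ℂ} (hu : ∀ n, ‖u n‖ ≤ 1)
    (hc : ∀ a b, ‖c a b‖ ≤ 1)
    (hmul : ∀ a b, u a * u b = c a b • u (a + b)) {f g : G → ℂ}
    (hf : Summable fun n => ‖f n‖) (hg : Summable fun n => ‖g n‖) :
    HasSum (fun k => (∑' m, f m * g (k - m) * c m (k - m)) • u k)
      ((∑' m, f m • u m) * ∑' n, g n • u n) := by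
  let φ : G × G → ℂ := fun p => f p.1 * g p.2 * c p.1 p.2
  have hφ : Summable fun p => ‖φ p‖ :=
    (hf.mul_norm hg).of_nonneg_of_le (fun _ => norm_nonneg _) fun p => by
      simp only [φ, norm_mul]
      exact mul_le_of_le_one_right (by positivity) (hc _ _)
  have hprod : (∑' m, f m • u m) * ∑' n, g n • u n = ∑' p : G × G, φ p • u (p.1 + p.2) := by
    have hfu := summable_norm_smul_of_norm_le_one hu hf
    have hgu := summable_norm_smul_of_norm_le_one hu hg
    rw [tsum_mul_tsum_of_summable_norm hfu hgu]
    refine tsum_congr fun p => ?_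
    rw [smul_mul_smul_comm, hmul, smul_smul]
  -- reindex the double series by `(k, m) ↦ (m, k - m)` and sum along the fibres `k = const`
  let e : G × G ≃ G × G :=
    (Equiv.prodComm G G).trans (Equiv.prodShear (Equiv.refl G) Equiv.subRight)
  have hsum : HasSum (fun p => φ (e p) • u ((e p).1 + (e p).2))
      (∑' p : G × G, φ p • u (p.1 + p.2)) :=
    e.hasSum_iff.2 (summable_norm_smul_of_norm_le_one (fun _ => hu _) hφ).of_norm.hasSum
  rw [hprod]
  refine hsum.prod_fiberwise fun k => ?_
  have hfibre := (hφ.of_norm.comp_injective e.injective).prod_factor k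
  simpa [e, φ] using hfibre.hasSum.smul_const (u k)

end AbsolutelyConvergentSeries

lemma hasSum_star_comp_neg_smul {G A : Type*} [AddGroup G] [AddCommMonoid A] [TopologicalSpace A]
    [StarAddMonoid A] [ContinuousStar A] [SMul ℂ A] [StarModule ℂ A] {u : G → A}
    (hu : ∀ n, star (u n) = u (-n)) {f : G → ℂ} {a : A} (h : HasSum (fun n => f n • u n) a) :
    HasSum (fun n => star (f (-n)) • u n) (star a) := by
  rw [← (Equiv.neg G).hasSum_iff]
  simpa [Function.comp_def, star_smul, hu] using h.star

theorem stmt1_general (d : ℕ) (σ : Zd d → Zd d → ℂ) (hσ : IsSkewBichar d σ)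
    (U : Zd d → (Hilb d →L[ℂ] Hilb d))
    (hU : ∀ n m, U n (eVec d m) = σ m n • eVec d (m - n)) :
    ∃ ρ : L1 d → (Hilb d →L[ℂ] Hilb d),
      (∀ f : L1 d, HasSum (fun n : Zd d => f n • U n) (ρ f)) ∧
      (∀ f : L1 d, ‖ρ f‖ ≤ ‖f‖) ∧
      (∀ f g fg : L1 d,
        (∀ n : Zd d, fg n = ∑' m : Zd d, f m * g (n - m) * σ m n) →
          ρ fg = (ρ f).comp (ρ g)) ∧
      (∀ f fs : L1 d,
        (∀ n : Zd d, fs n = starRingEnd ℂ (f (-n))) →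
          ρ fs = ContinuousLinearMap.adjoint (ρ f)) := by
  have hU1 := norm_twistedShift_le_one hσ hU
  have hasSum_ρ (f : L1 d) : HasSum (fun n => f n • U n) (∑' n, f n • U n) :=
    (summable_norm_smul_of_norm_le_one hU1 (lp.summable_norm_of_one f)).of_norm.hasSum
  refine ⟨fun f => ∑' n, f n • U n, hasSum_ρ, fun f => ?_, fun f g fg hfg => ?_,
    fun f fs hfs => ?_⟩
  · rw [lp.norm_eq_tsum_norm_of_one]
    exact norm_tsum_smul_le_of_norm_le_one hU1 (lp.summable_norm_of_one f)
  · have hconv := hasSum_twistedConvolution_smul hU1 (fun a b => (hσ.1 a b).le)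
      (twistedShift_mul hσ hU) (lp.summable_norm_of_one f) (lp.summable_norm_of_one g)
    simp_rw [hσ.map_sub_self_right, ← hfg] at hconv
    exact (hasSum_ρ fg).unique hconv
  · rw [← star_eq_adjoint]
    refine (hasSum_ρ fs).unique ?_
    simpa only [hfs, starRingEnd_apply] using
      hasSum_star_comp_neg_smul (star_twistedShift hσ hU) (hasSum_ρ f)

/-- For `f ∈ ℓ¹(ℤ^d)`, the series `ρ_σ(f) = ∑_n f(n) U_σ^n` converges in operator norm
with `‖ρ_σ(f)‖ ≤ ‖f‖₁`, `ρ_σ` sends twisted convolution to composition, and it sends the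
`ℓ¹`-adjoint to the Hilbert space adjoint. -/
theorem stmt1 (d : ℕ) (hd : 1 ≤ d) (σ : Zd d → Zd d → ℂ) (hσ : IsSkewBichar d σ)
    (U : Zd d → (Hilb d →L[ℂ] Hilb d))
    (hU : ∀ n m, U n (eVec d m) = σ m n • eVec d (m - n)) :
    ∃ ρ : L1 d → (Hilb d →L[ℂ] Hilb d),
      (∀ f : L1 d, HasSum (fun n : Zd d => f n • U n) (ρ f)) ∧
      (∀ f : L1 d, ‖ρ f‖ ≤ ‖f‖) ∧
      (∀ f g fg : L1 d,
        (∀ n : Zd d, fg n = ∑' m : Zd d, f m * g (n - m) * σ m n) →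
          ρ fg = (ρ f).comp (ρ g)) ∧
      (∀ f fs : L1 d,
        (∀ n : Zd d, fs n = starRingEnd ℂ (f (-n))) →
          ρ fs = ContinuousLinearMap.adjoint (ρ f)) :=
  stmt1_general d σ hσ U hU
end
end

section
/- Let d ≥ 1 and let σ be a skew bicharacter of ℤ^d. The map ρ_σ : ℓ¹(ℤ^d) → B(ℓ²(ℤ^d)) given by ρ_σ(f) = ∑_{n∈ℤ^d} f(n) U_σ^n is injective: if f ∈ ℓ¹(ℤ^d) and ρ_σ(f) = 0, then f = 0. -/
noncomputable section

/-!
Applying `∑ f(n) U_σ^n = 0` to `e_0` gives `∑ f(n) e_{-n} = 0`, since `σ(0, n) = 1`;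
reading off the coordinate at `-m` of this convergent series in `ℓ²` gives `f(m) = 0`.
-/

theorem IsSkewBichar.apply_zero_left {d : ℕ} {σ : Zd d → Zd d → ℂ} (hσ : IsSkewBichar d σ)
    (n : Zd d) : σ 0 n = 1 := by
  have hne : σ 0 n ≠ 0 := norm_ne_zero_iff.mp (by simp [hσ.1 0 n])
  have hsq : σ 0 n * σ 0 n = σ 0 n * 1 := by simpa using (hσ.2.1 0 0 n).symm
  exact mul_left_cancel₀ hne hsq

theorem lp.coeff_eq_zero_of_hasSum_smul_single {𝕜 α β : Type*} [NormedRing 𝕜] [DecidableEq β]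
    {p : ENNReal} [Fact (1 ≤ p)] {τ : α → β} (hτ : Function.Injective τ) {c : α → 𝕜}
    (hc : HasSum (fun n => c n • lp.single (E := fun _ : β => 𝕜) p (τ n) 1) 0) : c = 0 := by
  classical
  funext m
  have hcoord := hc.mapL (lp.evalCLM 𝕜 (fun _ : β => 𝕜) p (τ m))
  have hterm : (fun n => lp.evalCLM 𝕜 (fun _ : β => 𝕜) p (τ m) (c n • lp.single p (τ n) 1))
      = fun n => if n = m then c m else 0 := by
    funext n
    by_cases h : n = m
    · subst h; simp [lp.evalCLM]
    · simp [lp.evalCLM, h, hτ.ne (Ne.symm h)]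
  rw [hterm, map_zero] at hcoord
  exact (hasSum_ite_eq m (c m)).unique hcoord

theorem stmt2_general (d : ℕ) (σ : Zd d → Zd d → ℂ) (hσ : IsSkewBichar d σ)
    (U : Zd d → (Hilb d →L[ℂ] Hilb d))
    (hU : ∀ n m, U n (eVec d m) = σ m n • eVec d (m - n)) :
    ∀ f : L1 d, HasSum (fun n : Zd d => f n • U n) 0 → f = 0 := by
  intro f hf
  have hf₀ : HasSum (fun n : Zd d => f n • eVec d (-n)) 0 := by
    have := hf.mapL (ContinuousLinearMap.apply ℂ (Hilb d) (eVec d 0))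
    simpa [hU, hσ.apply_zero_left] using this
  ext m
  exact congrFun (lp.coeff_eq_zero_of_hasSum_smul_single neg_injective hf₀) m

/-- The map `ρ_σ : ℓ¹(ℤ^d) → B(ℓ²(ℤ^d))`, `ρ_σ(f) = ∑_n f(n) U_σ^n`, is injective:
if the series sums to the zero operator, then `f = 0`. -/
theorem stmt2 (d : ℕ) (hd : 1 ≤ d) (σ : Zd d → Zd d → ℂ) (hσ : IsSkewBichar d σ)
    (U : Zd d → (Hilb d →L[ℂ] Hilb d))
    (hU : ∀ n m, U n (eVec d m) = σ m n • eVec d (m - n)) :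
    ∀ f : L1 d, HasSum (fun n : Zd d => f n • U n) 0 → f = 0 :=
  stmt2_general d σ hσ U hU
end
end

section
/- Let d ≥ 1, let k : {1,…,d} → ℕ be a multi-index, and let σ be a skew bicharacter of ℤ^d such that σ(h,y) = 1 whenever h ∈ H_k and y ∈ ℤ^d. Let N, M ≥ 1 be integers such that every n ∈ ℤ^d with |n| ≤ N+M belongs to I_k. Let ω_{N,M} be the diagonal operator on ℓ²(ℤ^d) with ω_{N,M} e_n = w_{N,M}(n) e_n for all n ∈ ℤ^d. Then ω_{N,M} is a finite rank operator, and for every m ∈ I_k the commutator satisfies ‖ω_{N,M} ∘ S_{k,σ,m} − S_{k,σ,m} ∘ ω_{N,M}‖ ≤ |m|/M in operator norm. -/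
noncomputable section

/-- `H_k = k ℤ^d`, with the convention that `k i = 0` encodes `∞` (so `∞ℤ = {0}`). -/
def Hset (d : ℕ) (k : Fin d → ℕ) : Set (Zd d) :=
  {x | ∀ i, (k i : ℤ) ∣ x i}

/-- The centered fundamental domain `I_k` (no constraint on a coordinate when `k i = 0`). -/
def Iset (d : ℕ) (k : Fin d → ℕ) : Set (Zd d) :=
  {x | ∀ i, k i = 0 ∨
    (Int.fdiv (1 - (k i : ℤ)) 2 ≤ x i ∧ x i ≤ Int.fdiv ((k i : ℤ) - 1) 2)}

/-- The `ℓ¹` length `|x| = ∑_i |x_i|` on `ℤ^d`. -/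
def len (d : ℕ) (x : Zd d) : ℤ := ∑ i, |x i|

/-- The weight `w_{N,M}`. -/
def wgt (d N M : ℕ) (x : Zd d) : ℝ :=
  if len d x ≤ (N : ℤ) then 1
  else if len d x ≤ (N : ℤ) + (M : ℤ) then ((M : ℝ) + (N : ℝ) - (len d x : ℝ)) / (M : ℝ)
  else 0

/-!
The weight `wgt d N M` is a clamp of `(N + M - |x|) / M`, hence `1/M`-Lipschitz in `|x|` and
supported in the finite ball `|x| ≤ N + M`; so `W` has finite rank. The shift sends `e_x` to a
unimodular multiple of `e_{T x}`, where `T = shiftIndex r m` is injective, so the commutator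
sends `e_x` to `σ x m (w (T x) - w x) e_{T x}` and its norm is at most `sup_x |w (T x) - w x|`.
That difference vanishes unless `x` or `T x` lies in the ball, which forces `x ∈ I_k`; there
`T x = r (x - m)`, and since points of `I_k` are the `ℓ¹`-shortest elements of their `H_k`-cosets,
`| |T x| - |x| | ≤ |m|`.
-/

section Hilbert

variable {𝕜 ι ι' E F : Type*} [RCLike 𝕜] [NormedAddCommGroup E] [InnerProductSpace 𝕜 E]
  [NormedAddCommGroup F] [InnerProductSpace 𝕜 F]

theorem Orthonormal.norm_sum_smul_sq {v : ι → E} (hv : Orthonormal 𝕜 v) (a : ι → 𝕜)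
    (s : Finset ι) : ‖∑ i ∈ s, a i • v i‖ ^ 2 = ∑ i ∈ s, ‖a i‖ ^ 2 := by
  simpa using hv.orthogonalFamily.norm_sum a s

theorem HilbertBasis.opNorm_le_of_apply_eq_smul (b : HilbertBasis ι 𝕜 E) {u : ι' → F}
    (hu : Orthonormal 𝕜 u) {T : ι → ι'} (hT : Function.Injective T) (D : E →L[𝕜] F)
    (c : ι → 𝕜) {C : ℝ} (hC : 0 ≤ C) (hc : ∀ i, ‖c i‖ ≤ C)
    (hD : ∀ i, D (b i) = c i • u (T i)) : ‖D‖ ≤ C := by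
  have hfinite (s : Finset ι) (a : ι → 𝕜) :
      ‖D (∑ i ∈ s, a i • b i)‖ ≤ C * ‖∑ i ∈ s, a i • b i‖ := by
    have hDsum : D (∑ i ∈ s, a i • b i) = ∑ i ∈ s, (a i * c i) • (u ∘ T) i := by
      simp only [map_sum, map_smul, hD, smul_smul, Function.comp_apply]
    refine le_of_pow_le_pow_left₀ two_ne_zero (by positivity) ?_
    rw [hDsum, (hu.comp T hT).norm_sum_smul_sq, mul_pow, b.orthonormal.norm_sum_smul_sq,
      Finset.mul_sum]
    gcongr with i
    rw [norm_mul, mul_pow, mul_comm]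
    gcongr
    exact hc i
  refine D.opNorm_le_bound hC fun f => ?_
  have hf := b.hasSum_repr f
  exact le_of_tendsto_of_tendsto' ((D.continuous.tendsto f).comp hf).norm
    (hf.norm.const_mul C) fun s => hfinite s _

theorem HilbertBasis.finiteDimensional_range_of_apply_eq_zero (b : HilbertBasis ι 𝕜 E)
    (D : E →L[𝕜] F) {s : Set ι} (hs : s.Finite) (hD : ∀ i ∉ s, D (b i) = 0) :
    FiniteDimensional 𝕜 (LinearMap.range (D : E →ₗ[𝕜] F)) := by
  let V := Submodule.span 𝕜 ((fun i => D (b i)) '' s)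
  have : FiniteDimensional 𝕜 V := FiniteDimensional.span_of_finite 𝕜 (hs.image _)
  have hbasis (i : ι) : D (b i) ∈ V := by
    by_cases hi : i ∈ s
    · exact Submodule.subset_span ⟨i, hi, rfl⟩
    · rw [hD i hi]
      exact V.zero_mem
  refine Submodule.finiteDimensional_of_le (?_ : _ ≤ V)
  rintro _ ⟨f, rfl⟩
  refine V.closed_of_finiteDimensional.mem_of_tendsto
    ((D.continuous.tendsto f).comp (b.hasSum_repr f)) (Filter.Eventually.of_forall fun s => ?_)
  simp only [Function.comp_apply, map_sum, map_smul]
  exact V.sum_mem fun i _ => V.smul_mem _ (hbasis i)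

end Hilbert

def eBasis (d : ℕ) : HilbertBasis (Zd d) ℂ (Hilb d) :=
  HilbertBasis.ofRepr (LinearIsometryEquiv.refl ℂ _)

theorem eBasis_apply (d : ℕ) (n : Zd d) : eBasis d n = eVec d n := by
  classical
  rw [← HilbertBasis.repr_symm_single]
  rfl

theorem Int.abs_le_abs_add_of_dvd {k a h : ℤ} (ha : 2 * |a| ≤ k) (hh : k ∣ h) :
    |a| ≤ |a + h| := by
  obtain ⟨t, rfl⟩ := hh
  rcases eq_or_ne t 0 with rfl | ht
  · simp
  have hk : 0 ≤ k := by linarith [abs_nonneg a]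
  have hkt : k ≤ |k * t| := by
    rw [abs_mul, abs_of_nonneg hk]
    simpa using mul_le_mul_of_nonneg_left (Int.one_le_abs ht) hk
  have := abs_sub_abs_le_abs_sub (k * t) (-a)
  rw [sub_neg_eq_add, abs_neg, add_comm] at this
  linarith

def Hsubgroup (d : ℕ) (k : Fin d → ℕ) : AddSubgroup (Zd d) where
  carrier := Hset d k
  add_mem' hx hy i := dvd_add (hx i) (hy i)
  zero_mem' _ := dvd_zero _
  neg_mem' hx i := (hx i).neg_right

theorem mem_Hsubgroup {d : ℕ} {k : Fin d → ℕ} {x : Zd d} :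
    x ∈ Hsubgroup d k ↔ x ∈ Hset d k := Iff.rfl

section Lattice

variable {d : ℕ} {k : Fin d → ℕ}

theorem len_nonneg (x : Zd d) : 0 ≤ len d x :=
  Finset.sum_nonneg fun i _ => abs_nonneg (x i)

theorem len_add_le (x y : Zd d) : len d (x + y) ≤ len d x + len d y := by
  simp only [len, ← Finset.sum_add_distrib]
  exact Finset.sum_le_sum fun i _ => abs_add_le (x i) (y i)

theorem len_sub_le (x y : Zd d) : len d (x - y) ≤ len d x + len d y := by
  simp only [len, ← Finset.sum_add_distrib]
  exact Finset.sum_le_sum fun i _ => abs_sub (x i) (y i)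

theorem finite_setOf_len_le (R : ℤ) : {x : Zd d | len d x ≤ R}.Finite := by
  refine (Set.Finite.pi fun _ => Set.finite_Icc (-R) R).subset fun x hx i _ => ?_
  exact abs_le.mp ((Finset.single_le_sum (fun j _ => abs_nonneg (x j))
    (Finset.mem_univ i)).trans hx)

theorem bounds_of_mem_Iset {x : Zd d} (hx : x ∈ Iset d k) {i : Fin d} (hk : k i ≠ 0) :
    -(k i : ℤ) ≤ 2 * x i ∧ 2 * x i < k i := by
  obtain ⟨h1, h2⟩ := (hx i).resolve_left hk
  rw [Int.fdiv_eq_ediv_of_nonneg _ zero_le_two] at h1 h2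
  omega

theorem eq_of_mem_Iset_of_sub_mem_Hset {a b : Zd d} (ha : a ∈ Iset d k) (hb : b ∈ Iset d k)
    (hab : a - b ∈ Hset d k) : a = b := by
  funext i
  rw [← sub_eq_zero]
  by_cases hk : k i = 0
  · simpa [hk] using hab i
  obtain ⟨ha1, ha2⟩ := bounds_of_mem_Iset ha hk
  obtain ⟨hb1, hb2⟩ := bounds_of_mem_Iset hb hk
  exact Int.eq_zero_of_abs_lt_dvd (hab i) (abs_lt.mpr ⟨by omega, by omega⟩)

theorem len_le_len_add_of_mem_Iset {a h : Zd d} (ha : a ∈ Iset d k) (hh : h ∈ Hset d k) :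
    len d a ≤ len d (a + h) := by
  refine Finset.sum_le_sum fun i _ => ?_
  by_cases hk : k i = 0
  · have : h i = 0 := by simpa [hk] using hh i
    simp [this]
  obtain ⟨h1, h2⟩ := bounds_of_mem_Iset ha hk
  refine Int.abs_le_abs_add_of_dvd ?_ (hh i)
  rcases abs_cases (a i) with ⟨h, _⟩ | ⟨h, _⟩ <;> omega

end Lattice

def shiftIndex {d : ℕ} (r : Zd d → Zd d) (m x : Zd d) : Zd d := r (x - m) + (x - r x)

section Reduction

variable {d : ℕ} {k : Fin d → ℕ} {r : Zd d → Zd d}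
  (hr : ∀ n : Zd d, r n ∈ Iset d k ∧ n - r n ∈ Hset d k)
include hr

theorem reduce_eq_of_sub_mem {x y : Zd d} (hxy : x - y ∈ Hset d k) : r x = r y := by
  refine eq_of_mem_Iset_of_sub_mem_Hset (hr x).1 (hr y).1 ?_
  rw [← mem_Hsubgroup]
  convert sub_mem (add_mem (mem_Hsubgroup.mpr hxy) (mem_Hsubgroup.mpr (hr y).2))
    (mem_Hsubgroup.mpr (hr x).2) using 1
  abel

theorem reduce_eq_self {x : Zd d} (hx : x ∈ Iset d k) : r x = x :=
  (eq_of_mem_Iset_of_sub_mem_Hset hx (hr x).1 (hr x).2).symm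

theorem shiftIndex_sub_mem (m x : Zd d) : shiftIndex r m x - (x - m) ∈ Hset d k := by
  rw [← mem_Hsubgroup]
  convert sub_mem (mem_Hsubgroup.mpr (hr x).2) (mem_Hsubgroup.mpr (hr (x - m)).2) using 1
  simp only [shiftIndex]
  abel

theorem reduce_shiftIndex (m x : Zd d) : r (shiftIndex r m x) = r (x - m) :=
  reduce_eq_of_sub_mem hr (shiftIndex_sub_mem hr m x)

theorem shiftIndex_injective (m : Zd d) : Function.Injective (shiftIndex r m) := by
  intro x y hxy
  have hm : r (x - m) = r (y - m) := by
    rw [← reduce_shiftIndex hr, hxy, reduce_shiftIndex hr]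
  have hr_eq : r x = r y := by
    refine reduce_eq_of_sub_mem hr ?_
    rw [← mem_Hsubgroup]
    convert sub_mem (mem_Hsubgroup.mpr (hr (x - m)).2) (mem_Hsubgroup.mpr (hr (y - m)).2)
      using 1
    rw [hm]
    abel
  simpa [shiftIndex, hm, hr_eq] using hxy

theorem mem_Iset_of_shiftIndex_mem {m x : Zd d} (h : shiftIndex r m x ∈ Iset d k) :
    x ∈ Iset d k := by
  have hself : shiftIndex r m x = r (x - m) := by
    rw [← reduce_shiftIndex hr, reduce_eq_self hr h]
  have hx : x = r x := by
    simpa [shiftIndex, sub_eq_zero] using hself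
  exact hx ▸ (hr x).1

theorem abs_len_shiftIndex_sub_le {m x : Zd d} (hx : x ∈ Iset d k) :
    |len d (shiftIndex r m x) - len d x| ≤ len d m := by
  have hT : shiftIndex r m x = r (x - m) := by simp [shiftIndex, reduce_eq_self hr hx]
  have hTle : len d (shiftIndex r m x) ≤ len d x + len d m :=
    calc len d (shiftIndex r m x)
        ≤ len d (r (x - m) + ((x - m) - r (x - m))) := by
          rw [hT]
          exact len_le_len_add_of_mem_Iset (hr _).1 (hr _).2
      _ = len d (x - m) := by rw [add_sub_cancel]
      _ ≤ len d x + len d m := len_sub_le x m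
  have hxle : len d x ≤ len d (shiftIndex r m x) + len d m :=
    calc len d x ≤ len d (x + (shiftIndex r m x - (x - m))) :=
          len_le_len_add_of_mem_Iset hx (shiftIndex_sub_mem hr m x)
      _ = len d (shiftIndex r m x + m) := by congr 1; abel
      _ ≤ len d (shiftIndex r m x) + len d m := len_add_le _ m
  exact abs_le.mpr ⟨by linarith, by linarith⟩

end Reduction

section Weight

variable {d N M : ℕ}

theorem wgt_eq_clamp (hM : 0 < M) (x : Zd d) :
    wgt d N M x = max 0 (min 1 (((N : ℝ) + M - len d x) / M)) := by
  have hM' : (0 : ℝ) < M := Nat.cast_pos.mpr hM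
  unfold wgt
  split_ifs with h1 h2
  · have : (len d x : ℝ) ≤ N := by exact_mod_cast h1
    rw [min_eq_left ((le_div_iff₀ hM').mpr (by linarith)), max_eq_right zero_le_one]
  · have : (N : ℝ) < len d x := by exact_mod_cast not_le.mp h1
    have : (len d x : ℝ) ≤ N + M := by exact_mod_cast h2
    rw [min_eq_right ((div_le_one hM').mpr (by linarith)),
      max_eq_right (div_nonneg (by linarith) hM'.le), add_comm (M : ℝ)]
  · have : (N : ℝ) + M < len d x := by exact_mod_cast not_le.mp h2
    rw [max_eq_left (min_le_of_right_le (div_nonpos_of_nonpos_of_nonneg (by linarith) hM'.le))]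

theorem wgt_eq_zero {x : Zd d} (h : (N : ℤ) + M < len d x) : wgt d N M x = 0 := by
  unfold wgt
  split_ifs <;> first | rfl | omega

theorem abs_wgt_sub_wgt_le (hM : 0 < M) (x y : Zd d) :
    |wgt d N M x - wgt d N M y| ≤ |(len d x : ℝ) - len d y| / M := by
  rw [wgt_eq_clamp hM, wgt_eq_clamp hM, max_comm 0, max_comm 0]
  refine (abs_max_sub_max_le_abs _ _ _).trans ((abs_min_sub_min_le_max _ _ _ _).trans ?_)
  rw [sub_self, abs_zero, max_eq_right (abs_nonneg _), div_sub_div_same, abs_div,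
    Nat.abs_cast, sub_sub_sub_cancel_left, abs_sub_comm]

theorem abs_wgt_shiftIndex_sub_le {k : Fin d → ℕ} {r : Zd d → Zd d}
    (hr : ∀ n : Zd d, r n ∈ Iset d k ∧ n - r n ∈ Hset d k) (hM : 0 < M)
    (hNM : ∀ n : Zd d, len d n ≤ (N : ℤ) + (M : ℤ) → n ∈ Iset d k) (m x : Zd d) :
    |wgt d N M (shiftIndex r m x) - wgt d N M x| ≤ (len d m : ℝ) / M := by
  by_cases hx : x ∈ Iset d k
  · refine (abs_wgt_sub_wgt_le hM _ _).trans (div_le_div_of_nonneg_right ?_ (Nat.cast_nonneg M))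
    exact_mod_cast abs_len_shiftIndex_sub_le hr hx
  · have hTx : shiftIndex r m x ∉ Iset d k := fun h => hx (mem_Iset_of_shiftIndex_mem hr h)
    rw [wgt_eq_zero (not_le.mp (mt (hNM _) hTx)), wgt_eq_zero (not_le.mp (mt (hNM x) hx)),
      sub_zero, abs_zero]
    exact div_nonneg (Int.cast_nonneg (len_nonneg m)) (Nat.cast_nonneg M)

end Weight

theorem stmt10_general (d : ℕ) (k : Fin d → ℕ)
    (σ : Zd d → Zd d → ℂ) (hσ : IsSkewBichar d σ)
    (N M : ℕ) (hM : 1 ≤ M)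
    (hNM : ∀ n : Zd d, len d n ≤ (N : ℤ) + (M : ℤ) → n ∈ Iset d k)
    (r : Zd d → Zd d)
    (hr : ∀ n : Zd d, r n ∈ Iset d k ∧ n - r n ∈ Hset d k)
    (m : Zd d)
    (W : Hilb d →L[ℂ] Hilb d)
    (hW : ∀ n : Zd d, W (eVec d n) = (wgt d N M n : ℂ) • eVec d n)
    (S : Hilb d →L[ℂ] Hilb d)
    (hS : ∀ x : Zd d, S (eVec d x) = σ x m • eVec d (r (x - m) + (x - r x))) :
    FiniteDimensional ℂ (LinearMap.range (W : Hilb d →ₗ[ℂ] Hilb d)) ∧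
    ‖W.comp S - S.comp W‖ ≤ (len d m : ℝ) / (M : ℝ) := by
  have hcomm (x : Zd d) : (W.comp S - S.comp W) (eBasis d x) =
      (σ x m * ((wgt d N M (shiftIndex r m x) : ℂ) - wgt d N M x)) •
        eBasis d (shiftIndex r m x) := by
    simp only [sub_apply, ContinuousLinearMap.comp_apply, eBasis_apply, hW,
      hS, map_smul, smul_smul, ← sub_smul, shiftIndex]
    ring_nf
  constructor
  · refine (eBasis d).finiteDimensional_range_of_apply_eq_zero W
      (finite_setOf_len_le ((N : ℤ) + M)) fun n hn => ?_
    rw [eBasis_apply, hW, wgt_eq_zero (not_le.mp hn), Complex.ofReal_zero, zero_smul]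
  · refine (eBasis d).opNorm_le_of_apply_eq_smul (eBasis d).orthonormal
      (shiftIndex_injective hr m) _ _ (div_nonneg (Int.cast_nonneg (len_nonneg m))
      (Nat.cast_nonneg M)) (fun x => ?_) hcomm
    rw [norm_mul, hσ.1, one_mul, ← Complex.ofReal_sub, Complex.norm_real, Real.norm_eq_abs]
    exact abs_wgt_shiftIndex_sub_le hr hM hNM m x

/-- The diagonal pivot `ω_{N,M}` is a finite rank operator, and for every `m ∈ I_k` the
commutator with the twisted shift `S_{k,σ,m}` has operator norm at most `|m|/M`. -/
theorem stmt10 (d : ℕ) (hd : 1 ≤ d) (k : Fin d → ℕ)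
    (σ : Zd d → Zd d → ℂ) (hσ : IsSkewBichar d σ)
    (hσH : ∀ h ∈ Hset d k, ∀ y : Zd d, σ h y = 1)
    (N M : ℕ) (hN : 1 ≤ N) (hM : 1 ≤ M)
    (hNM : ∀ n : Zd d, len d n ≤ (N : ℤ) + (M : ℤ) → n ∈ Iset d k)
    (r : Zd d → Zd d)
    (hr : ∀ n : Zd d, r n ∈ Iset d k ∧ n - r n ∈ Hset d k)
    (m : Zd d) (hm : m ∈ Iset d k)
    (W : Hilb d →L[ℂ] Hilb d)
    (hW : ∀ n : Zd d, W (eVec d n) = (wgt d N M n : ℂ) • eVec d n)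
    (S : Hilb d →L[ℂ] Hilb d)
    (hS : ∀ x : Zd d, S (eVec d x) = σ x m • eVec d (r (x - m) + (x - r x))) :
    FiniteDimensional ℂ (LinearMap.range (W : Hilb d →ₗ[ℂ] Hilb d)) ∧
    ‖W.comp S - S.comp W‖ ≤ (len d m : ℝ) / (M : ℝ) :=
  stmt10_general d k σ hσ N M hM hNM r hr m W hW S hS
end
end

section
/- Let d ≥ 1. Let (k_j)_{j∈ℕ} and k_∞ be multi-indices {1,…,d} → ℕ (with 0 encoding ∞) such that for each i ∈ {1,…,d}: if k_∞(i) ≥ 1 then k_j(i) = k_∞(i) for all sufficiently large j, and if k_∞(i) = 0 then for every B ∈ ℕ, for all sufficiently large j either k_j(i) = 0 or k_j(i) > B. Let (σ_j)_{j∈ℕ} and σ_∞ be skew bicharacters of ℤ^d such that σ_j(h,y) = 1 whenever h ∈ H_{k_j} (and similarly for σ_∞ and H_{k_∞}), and such that σ_j(x,y) → σ_∞(x,y) as j → ∞ for every (x,y) ∈ ℤ^d × ℤ^d. Then for every f ∈ ℓ¹(ℤ^d), the operators T_{k_j,σ_j,f} converge to T_{k_∞,σ_∞,f} in the strong operator topology: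 for every ξ ∈ ℓ²(ℤ^d), ‖(T_{k_j,σ_j,f} − T_{k_∞,σ_∞,f})ξ‖₂ → 0 as j → ∞. -/
/-!
Each `S_{k,σ,m}` sends `e_x` to a unimodular multiple of `e_{φ(x)}` with `φ` injective, so it is
an isometry. For fixed `n` the reductions `⌊n⌋_{k_j}` are eventually equal to `⌊n⌋_{k_∞}`, hence
`S_{k_j,σ_j,m} e_x → S_{k_∞,σ_∞,m} e_x`; the uniform bound `‖S‖ ≤ 1` upgrades this to strong
convergence, and dominated convergence in `∑ f(m) S_m` (dominated by `|f(m)| ‖ξ‖`) concludes.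
-/

noncomputable section

open Filter

/-- Convergence of the multi-indices `k_j` to `k_∞` in `(ℕ∗ ∪ {∞})^d`, where `0` encodes
`∞`: coordinates with finite limit are eventually constant, and coordinates with limit
`∞` are eventually `∞` or larger than any given bound. -/
def MultiIndexTendsto (d : ℕ) (k : ℕ → Fin d → ℕ) (kinf : Fin d → ℕ) : Prop :=
  (∀ i, 1 ≤ kinf i → ∀ᶠ j in atTop, k j i = kinf i) ∧
  (∀ i, kinf i = 0 → ∀ B : ℕ, ∀ᶠ j in atTop, k j i = 0 ∨ B < k j i)

open Topology

section Operators

variable {ι 𝕜 E : Type*} [RCLike 𝕜] [NormedAddCommGroup E] [InnerProductSpace 𝕜 E]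

theorem Orthonormal.smul_of_norm_eq_one {v : ι → E} (hv : Orthonormal 𝕜 v) {c : ι → 𝕜}
    (hc : ∀ i, ‖c i‖ = 1) : Orthonormal 𝕜 (fun i => c i • v i) := by
  classical
  rw [orthonormal_iff_ite] at hv ⊢
  intro i j
  rw [inner_smul_left, inner_smul_right, hv]
  split_ifs with h
  · subst h; simp [RCLike.conj_mul, hc]
  · simp

theorem norm_apply_eq_of_apply_single_orthonormal [CompleteSpace E] [DecidableEq ι]
    {A : lp (fun _ : ι => 𝕜) 2 →L[𝕜] E} {w : ι → E} (hw : Orthonormal 𝕜 w)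
    (hA : ∀ i, A (lp.single 2 i 1) = w i)
    (ξ : lp (fun _ : ι => 𝕜) 2) : ‖A ξ‖ = ‖ξ‖ := by
  have hAL : A = hw.orthogonalFamily.linearIsometry.toContinuousLinearMap := by
    refine lp.ext_continuousLinearMap ENNReal.ofNat_ne_top fun i => ?_
    ext
    simp [hA]
  rw [hAL]
  exact hw.orthogonalFamily.linearIsometry.norm_map ξ

end Operators

section Density

variable {ι 𝕜 E F : Type*} [NontriviallyNormedField 𝕜] [NormedAddCommGroup E] [NormedSpace 𝕜 E]
  [NormedAddCommGroup F] [NormedSpace 𝕜 F]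

theorem tendsto_apply_of_dense_span {l : Filter ι} {A : ι → E →L[𝕜] F} {B : E →L[𝕜] F}
    {C : ℝ} (hAC : ∀ i, ‖A i‖ ≤ C) {s : Set E}
    (hs : (Submodule.span 𝕜 s).topologicalClosure = ⊤)
    (hAB : ∀ v ∈ s, Tendsto (fun i => A i v) l (𝓝 (B v))) (ξ : E) :
    Tendsto (fun i => A i ξ) l (𝓝 (B ξ)) := by
  have hequi : Equicontinuous fun i => (A i : E → F) :=
    ((NormedSpace.equicontinuous_TFAE A).out 5 1).mp (⟨C, hAC⟩ : ∃ C, ∀ i, ‖A i‖ ≤ C)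
  refine (hequi ξ).tendsto_of_mem_closure (B.continuous.continuousAt.mono_left nhdsWithin_le_nhds)
    (s := Submodule.span 𝕜 s) (fun v hv => ?_) ?_
  · induction hv using Submodule.span_induction with
    | mem v hv => exact hAB v hv
    | zero => simpa using (tendsto_const_nhds : Tendsto (fun _ => (0 : F)) l _)
    | add v w _ _ hv hw => simpa using hv.add hw
    | smul a v _ hv => simpa using hv.const_smul a
  · rw [← Submodule.topologicalClosure_coe, hs]
    trivial

end Density

section Series

variable {ι κ 𝕜 E F : Type*} [NontriviallyNormedField 𝕜] [NormedAddCommGroup E] [NormedSpace 𝕜 E]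
  [NormedAddCommGroup F] [NormedSpace 𝕜 F] [CompleteSpace F]

theorem tendsto_apply_of_hasSum_smul {l : Filter ι} {f : κ → 𝕜} (hf : Summable fun m => ‖f m‖)
    {A : ι → κ → E →L[𝕜] F} {B : κ → E →L[𝕜] F} {C : ℝ} (hAC : ∀ i m, ‖A i m‖ ≤ C)
    {T : ι → E →L[𝕜] F} {T' : E →L[𝕜] F}
    (hT : ∀ i, HasSum (fun m => f m • A i m) (T i)) (hT' : HasSum (fun m => f m • B m) T')
    (ξ : E) (hAB : ∀ m, Tendsto (fun i => A i m ξ) l (𝓝 (B m ξ))) :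
    Tendsto (fun i => T i ξ) l (𝓝 (T' ξ)) := by
  have happly : ∀ {S : κ → E →L[𝕜] F} {S' : E →L[𝕜] F}, HasSum (fun m => f m • S m) S' →
      S' ξ = ∑' m, f m • S m ξ := fun h =>
    ((h.mapL (ContinuousLinearMap.apply 𝕜 F ξ)).tsum_eq).symm
  simp only [happly (hT _), happly hT']
  refine tendsto_tsum_of_dominated_convergence (hf.mul_right (C * ‖ξ‖))
    (fun m => (hAB m).const_smul (f m)) (Eventually.of_forall fun i m => ?_)
  rw [norm_smul]
  gcongr
  exact (A i m).le_of_opNorm_le (hAC i m) ξ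

end Series

def InCenteredRange (k : ℕ) (a : ℤ) : Prop :=
  k = 0 ∨ (Int.fdiv (1 - (k : ℤ)) 2 ≤ a ∧ a ≤ Int.fdiv ((k : ℤ) - 1) 2)

theorem InCenteredRange.eq_of_dvd_sub {k : ℕ} {a b : ℤ} (ha : InCenteredRange k a)
    (hb : InCenteredRange k b) (h : (k : ℤ) ∣ a - b) : a = b := by
  rcases eq_or_ne k 0 with rfl | hk
  · simpa [sub_eq_zero] using h
  obtain ⟨ha₁, ha₂⟩ := ha.resolve_left hk
  obtain ⟨hb₁, hb₂⟩ := hb.resolve_left hk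
  rw [Int.fdiv_eq_ediv_of_nonneg _ zero_le_two] at ha₁ ha₂ hb₁ hb₂
  have : a - b = 0 := Int.eq_zero_of_abs_lt_dvd h (by rw [abs_lt]; omega)
  omega

theorem inCenteredRange_of_natAbs_lt {k : ℕ} {a : ℤ} (h : k = 0 ∨ 2 * a.natAbs < k) :
    InCenteredRange k a := by
  refine h.imp id fun h => ?_
  rw [Int.fdiv_eq_ediv_of_nonneg _ zero_le_two, Int.fdiv_eq_ediv_of_nonneg _ zero_le_two]
  omega

theorem sub_mem_Hset {d : ℕ} {k : Fin d → ℕ} {x y : Zd d} (hx : x ∈ Hset d k)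
    (hy : y ∈ Hset d k) : x - y ∈ Hset d k :=
  fun i => dvd_sub (hx i) (hy i)

theorem eq_of_mem_Iset_of_sub_mem_Hset_s11 {d : ℕ} {k : Fin d → ℕ} {x y : Zd d}
    (hx : x ∈ Iset d k) (hy : y ∈ Iset d k) (h : x - y ∈ Hset d k) : x = y :=
  funext fun i => InCenteredRange.eq_of_dvd_sub (hx i) (hy i) (h i)

/-- `r n` plays the role of `⌊n⌋_k` and `n - r n` that of `[n]_k`. -/
def IsReductionMod (d : ℕ) (k : Fin d → ℕ) (r : Zd d → Zd d) : Prop :=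
  ∀ n, r n ∈ Iset d k ∧ n - r n ∈ Hset d k

namespace IsReductionMod

variable {d : ℕ} {k : Fin d → ℕ} {r : Zd d → Zd d}

theorem eq_of_sub_mem (hr : IsReductionMod d k r) {a b : Zd d} (h : a - b ∈ Hset d k) :
    r a = r b := by
  refine eq_of_mem_Iset_of_sub_mem_Hset_s11 (hr a).1 (hr b).1 ?_
  have := sub_mem_Hset h (sub_mem_Hset (hr a).2 (hr b).2)
  rwa [show a - b - (a - r a - (b - r b)) = r a - r b by abel] at this

theorem injective_reindex (hr : IsReductionMod d k r) (m : Zd d) :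
    Function.Injective fun x => r (x - m) + (x - r x) := by
  intro x y hxy
  have hm : r (x - m) = r (y - m) := eq_of_mem_Iset_of_sub_mem_Hset_s11 (hr _).1 (hr _).1 (by
    rw [show r (x - m) - r (y - m) = (y - r y) - (x - r x) by
      simp only at hxy; linear_combination hxy]
    exact sub_mem_Hset (hr y).2 (hr x).2)
  have hxy' : x - y ∈ Hset d k := by
    have := sub_mem_Hset (hr (x - m)).2 (hr (y - m)).2
    rwa [hm, show x - m - r (y - m) - (y - m - r (y - m)) = x - y by abel] at this
  have h0 : r x = r y := hr.eq_of_sub_mem hxy'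
  simp only [hm, h0, add_right_inj, sub_left_inj] at hxy
  exact hxy

end IsReductionMod

theorem eventually_reduction_eq {d : ℕ} {k : ℕ → Fin d → ℕ} {kinf : Fin d → ℕ}
    (hk : MultiIndexTendsto d k kinf) {r : ℕ → Zd d → Zd d} {rinf : Zd d → Zd d}
    (hr : ∀ j, IsReductionMod d (k j) (r j)) (hrinf : IsReductionMod d kinf rinf) (n : Zd d) :
    ∀ᶠ j in atTop, r j n = rinf n := by
  suffices ∀ i, ∀ᶠ j in atTop, r j n i = rinf n i by
    exact (eventually_all.2 this).mono fun j h => funext h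
  intro i
  rcases Nat.eq_zero_or_pos (kinf i) with h0 | hpos
  -- `k j i` is eventually `∞` or so large that `n i` itself is the centred representative.
  · have hn : rinf n i = n i := by
      have := (hrinf n).2 i
      rw [h0, Nat.cast_zero, zero_dvd_iff, Pi.sub_apply, sub_eq_zero] at this
      exact this.symm
    filter_upwards [hk.2 i h0 (2 * (n i).natAbs)] with j hj
    rw [hn]
    exact InCenteredRange.eq_of_dvd_sub ((hr j n).1 i) (inCenteredRange_of_natAbs_lt hj)
      (dvd_sub_comm.mp ((hr j n).2 i))
  · filter_upwards [hk.1 i hpos] with j hj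
    refine InCenteredRange.eq_of_dvd_sub (hj ▸ (hr j n).1 i) ((hrinf n).1 i) ?_
    have := dvd_sub ((hrinf n).2 i) (hj ▸ (hr j n).2 i)
    rwa [Pi.sub_apply, Pi.sub_apply, sub_sub_sub_cancel_left] at this

theorem eVec_eq_hilbertBasis (d : ℕ) : eVec d = ⇑(default : HilbertBasis (Zd d) ℂ (Hilb d)) :=
  funext fun x => by rw [← HilbertBasis.repr_symm_single]; rfl

theorem norm_le_one_of_apply_eVec {d : ℕ} {A : Hilb d →L[ℂ] Hilb d} {c : Zd d → ℂ}
    {π : Zd d → Zd d} (hπ : Function.Injective π) (hc : ∀ x, ‖c x‖ = 1)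
    (hA : ∀ x, A (eVec d x) = c x • eVec d (π x)) : ‖A‖ ≤ 1 := by
  have hw : Orthonormal ℂ fun x => c x • eVec d (π x) := by
    rw [eVec_eq_hilbertBasis]
    exact ((HilbertBasis.orthonormal _).comp π hπ).smul_of_norm_eq_one hc
  refine A.opNorm_le_bound zero_le_one fun ξ => ?_
  rw [one_mul, norm_apply_eq_of_apply_single_orthonormal hw hA]

theorem stmt11_general (d : ℕ)
    (k : ℕ → Fin d → ℕ) (kinf : Fin d → ℕ)
    (hk : MultiIndexTendsto d k kinf)
    (σ : ℕ → Zd d → Zd d → ℂ) (σinf : Zd d → Zd d → ℂ)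
    (hσ : ∀ j, IsSkewBichar d (σ j))
    (hσconv : ∀ x y : Zd d, Tendsto (fun j => σ j x y) atTop (nhds (σinf x y)))
    (r : ℕ → Zd d → Zd d) (rinf : Zd d → Zd d)
    (hr : ∀ j, ∀ n : Zd d, r j n ∈ Iset d (k j) ∧ n - r j n ∈ Hset d (k j))
    (hrinf : ∀ n : Zd d, rinf n ∈ Iset d kinf ∧ n - rinf n ∈ Hset d kinf)
    (S : ℕ → Zd d → (Hilb d →L[ℂ] Hilb d)) (Sinf : Zd d → (Hilb d →L[ℂ] Hilb d))
    (hS : ∀ j, ∀ m x : Zd d,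
      S j m (eVec d x) = σ j x m • eVec d (r j (x - m) + (x - r j x)))
    (hSinf : ∀ m x : Zd d,
      Sinf m (eVec d x) = σinf x m • eVec d (rinf (x - m) + (x - rinf x)))
    (f : L1 d)
    (T : ℕ → (Hilb d →L[ℂ] Hilb d)) (Tinf : Hilb d →L[ℂ] Hilb d)
    (hT : ∀ j, HasSum (fun m : Zd d => f m • S j m) (T j))
    (hTinf : HasSum (fun m : Zd d => f m • Sinf m) Tinf) :
    ∀ ξ : Hilb d, Tendsto (fun j => ‖(T j - Tinf) ξ‖) atTop (nhds 0) := by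
  intro ξ
  have hSnorm : ∀ j m, ‖S j m‖ ≤ 1 := fun j m =>
    norm_le_one_of_apply_eVec (IsReductionMod.injective_reindex (hr j) m)
      (fun x => (hσ j).1 x m) (hS j m)
  have hSbasis : ∀ m x, Tendsto (fun j => S j m (eVec d x)) atTop (𝓝 (Sinf m (eVec d x))) := by
    intro m x
    rw [hSinf]
    refine ((hσconv x m).smul_const _).congr' ?_
    filter_upwards [eventually_reduction_eq hk hr hrinf (x - m),
      eventually_reduction_eq hk hr hrinf x] with j h₁ h₂
    rw [hS, h₁, h₂]
  have hSconv : ∀ m, Tendsto (fun j => S j m ξ) atTop (𝓝 (Sinf m ξ)) := fun m =>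
    tendsto_apply_of_dense_span (hSnorm · m) (eVec_eq_hilbertBasis d ▸ HilbertBasis.dense_span _)
      (by rintro _ ⟨x, rfl⟩; exact hSbasis m x) ξ
  have hf : Summable fun m => ‖f m‖ := by
    simpa using (lp.memℓp f).summable (by norm_num : (0 : ℝ) < (1 : ENNReal).toReal)
  simpa only [sub_apply, ← tendsto_iff_norm_sub_tendsto_zero] using
    tendsto_apply_of_hasSum_smul hf hSnorm hT hTinf ξ hSconv

/-- If `(k_j, σ_j) → (k_∞, σ_∞)` in `Ξ^d`, then for every `f ∈ ℓ¹(ℤ^d)` the operators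
`T_{k_j,σ_j,f} = ∑_m f(m) S_{k_j,σ_j,m}` converge to `T_{k_∞,σ_∞,f}` in the strong
operator topology on `ℓ²(ℤ^d)`. -/
theorem stmt11 (d : ℕ) (hd : 1 ≤ d)
    (k : ℕ → Fin d → ℕ) (kinf : Fin d → ℕ)
    (hk : MultiIndexTendsto d k kinf)
    (σ : ℕ → Zd d → Zd d → ℂ) (σinf : Zd d → Zd d → ℂ)
    (hσ : ∀ j, IsSkewBichar d (σ j)) (hσinf : IsSkewBichar d σinf)
    (hσH : ∀ j, ∀ h ∈ Hset d (k j), ∀ y : Zd d, σ j h y = 1)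
    (hσinfH : ∀ h ∈ Hset d kinf, ∀ y : Zd d, σinf h y = 1)
    (hσconv : ∀ x y : Zd d, Tendsto (fun j => σ j x y) atTop (nhds (σinf x y)))
    (r : ℕ → Zd d → Zd d) (rinf : Zd d → Zd d)
    (hr : ∀ j, ∀ n : Zd d, r j n ∈ Iset d (k j) ∧ n - r j n ∈ Hset d (k j))
    (hrinf : ∀ n : Zd d, rinf n ∈ Iset d kinf ∧ n - rinf n ∈ Hset d kinf)
    (S : ℕ → Zd d → (Hilb d →L[ℂ] Hilb d)) (Sinf : Zd d → (Hilb d →L[ℂ] Hilb d))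
    (hS : ∀ j, ∀ m x : Zd d,
      S j m (eVec d x) = σ j x m • eVec d (r j (x - m) + (x - r j x)))
    (hSinf : ∀ m x : Zd d,
      Sinf m (eVec d x) = σinf x m • eVec d (rinf (x - m) + (x - rinf x)))
    (f : L1 d)
    (T : ℕ → (Hilb d →L[ℂ] Hilb d)) (Tinf : Hilb d →L[ℂ] Hilb d)
    (hT : ∀ j, HasSum (fun m : Zd d => f m • S j m) (T j))
    (hTinf : HasSum (fun m : Zd d => f m • Sinf m) Tinf) :
    ∀ ξ : Hilb d, Tendsto (fun j => ‖(T j - Tinf) ξ‖) atTop (nhds 0) :=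
  stmt11_general d k kinf hk σ σinf hσ hσconv r rinf hr hrinf S Sinf hS hSinf f T Tinf hT hTinf
end
end

section
/- Let G be a compact Hausdorff abelian topological group whose continuous characters (continuous group homomorphisms from G to the circle group {z ∈ ℂ : |z| = 1}) separate points, and let λ be the Haar probability measure on G. Let f : G → ℂ be a continuous function with f(1) = 0, and let ε > 0. Then there exists a continuous function φ : G → ℝ which is a finite ℂ-linear combination of continuous characters of G, such that φ(g) ≥ 0 for all g ∈ G, ∫_G φ dλ = 1, and ∫_G φ·|f| dλ ≤ ε. -/
open MeasureTheory

/-!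
Finitely many continuous characters `χ₁, …, χₖ` detect the compact set `K = {|f| ≥ ε/2}`, which
avoids `1`: every `g ∈ K` has some `χᵢ g ≠ 1`. The kernel `ρ = 1 + ∑ |1 + χᵢ|²` is a real
trigonometric polynomial, because `|1 + χ|² = (1 + χ)(1 + χ̄)` and `χ̄` is again a character.
On the circle `|1 + z|² = 4 - |1 - z|²`, so `ρ` is maximal at `1` and strictly smaller on `K`.
The normalised powers `ρⁿ / ∫ ρⁿ` therefore put vanishing mass on `K`: there `ρⁿ ≤ bⁿ`, while
`∫ ρⁿ ≥ aⁿ λ{ρ > a}` for some `b < a < ρ 1`, and open sets have positive Haar measure.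
Off `K` the integrand is at most `ε/2` times the kernel.
-/

theorem IsCompact.exists_lt_forall_le {X : Type*} [TopologicalSpace X] {K : Set X}
    (hK : IsCompact K) {r : X → ℝ} (hr : ContinuousOn r K) {c : ℝ} (hc : ∀ y ∈ K, r y < c) :
    ∃ b < c, ∀ y ∈ K, r y ≤ b := by
  rcases K.eq_empty_or_nonempty with rfl | hne
  · exact ⟨c - 1, by linarith, by simp⟩
  · obtain ⟨x, hx, hmax⟩ := hK.exists_isMaxOn hne hr
    exact ⟨r x, hc x hx, hmax⟩

section Concentration

variable {X : Type*} [TopologicalSpace X] [CompactSpace X] [MeasurableSpace X]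
  [OpensMeasurableSpace X] {μ : Measure X} [IsFiniteMeasure μ]

theorem Continuous.integrable_of_compactSpace {F : X → ℝ} (hF : Continuous F) :
    Integrable F μ :=
  hF.integrable_of_hasCompactSupport (HasCompactSupport.of_compactSpace F)

theorem pow_mul_measureReal_lt_le_integral_pow {r : X → ℝ} (hr : Continuous r) (hr0 : 0 ≤ r)
    {a : ℝ} (ha : 0 ≤ a) (n : ℕ) :
    a ^ n * μ.real {y | a < r y} ≤ ∫ y, r y ^ n ∂μ :=
  calc a ^ n * μ.real {y | a < r y} ≤ a ^ n * μ.real {y | a ^ n ≤ r y ^ n} := by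
        refine mul_le_mul_of_nonneg_left (measureReal_mono fun y (hy : a < r y) => ?_)
          (pow_nonneg ha n)
        exact pow_le_pow_left₀ ha hy.le n
    _ ≤ ∫ y, r y ^ n ∂μ :=
        mul_meas_ge_le_integral_of_nonneg (ae_of_all _ fun y => pow_nonneg (hr0 y) n)
          (hr.pow n).integrable_of_compactSpace _

theorem exists_integral_pow_mul_le [μ.IsOpenPosMeasure] {r h : X → ℝ} (hr : Continuous r)
    (hr0 : 0 ≤ r) (hh : Continuous h) (hh0 : 0 ≤ h) {x₀ : X} (hx₀ : 0 < r x₀) {δ : ℝ}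
    (hδ : 0 < δ) (hpeak : ∀ y, δ ≤ h y → r y < r x₀) :
    ∃ n : ℕ, 0 < ∫ y, r y ^ n ∂μ ∧ ∫ y, r y ^ n * h y ∂μ ≤ 2 * δ * ∫ y, r y ^ n ∂μ := by
  obtain ⟨b, hb0, hbx₀, hbK⟩ : ∃ b, 0 ≤ b ∧ b < r x₀ ∧ ∀ y, δ ≤ h y → r y ≤ b := by
    obtain ⟨b, hb, hbK⟩ := (isClosed_le continuous_const hh).isCompact.exists_lt_forall_le
      hr.continuousOn hpeak
    exact ⟨max b 0, le_max_right _ _, max_lt hb hx₀,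
      fun y hy => (hbK y hy).trans (le_max_left _ _)⟩
  obtain ⟨a, hba, hax₀⟩ := exists_between hbx₀
  have ha0 : 0 < a := hb0.trans_lt hba
  set m := μ.real {y | a < r y}
  have hm : 0 < m := ENNReal.toReal_pos
    ((isOpen_lt continuous_const hr).measure_pos μ ⟨x₀, hax₀⟩).ne' (measure_ne_top μ _)
  obtain ⟨n, hn⟩ : ∃ n : ℕ, (b / a) ^ n * ∫ y, h y ∂μ < δ * m := by
    have hlim := (tendsto_pow_atTop_nhds_zero_of_lt_one (div_nonneg hb0 ha0.le)
      ((div_lt_one ha0).2 hba)).mul_const (∫ y, h y ∂μ)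
    rw [zero_mul] at hlim
    exact (hlim.eventually (gt_mem_nhds (mul_pos hδ hm))).exists
  have hlow := pow_mul_measureReal_lt_le_integral_pow (μ := μ) hr hr0 ha0.le n
  refine ⟨n, (mul_pos (pow_pos ha0 n) hm).trans_le hlow, ?_⟩
  have hpointwise : ∀ y, r y ^ n * h y ≤ b ^ n * h y + δ * r y ^ n := by
    intro y
    have hrn := pow_nonneg (hr0 y) n
    by_cases hy : δ ≤ h y
    · have := pow_le_pow_left₀ (hr0 y) (hbK y hy) n
      nlinarith [hh0 y]
    · nlinarith [mul_le_mul_of_nonneg_left (not_le.1 hy).le hrn,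
        mul_nonneg (pow_nonneg hb0 n) (hh0 y)]
  have hrn_int : Integrable (fun y => r y ^ n) μ := (hr.pow n).integrable_of_compactSpace
  have hh_int : Integrable h μ := hh.integrable_of_compactSpace
  calc ∫ y, r y ^ n * h y ∂μ ≤ ∫ y, (b ^ n * h y + δ * r y ^ n) ∂μ :=
        integral_mono ((hr.pow n).mul hh).integrable_of_compactSpace
          ((hh_int.const_mul _).add (hrn_int.const_mul _)) hpointwise
    _ = (b / a) ^ n * (∫ y, h y ∂μ) * a ^ n + δ * ∫ y, r y ^ n ∂μ := by
        rw [integral_add (hh_int.const_mul _) (hrn_int.const_mul _), integral_const_mul,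
          integral_const_mul, div_pow, div_mul_eq_mul_div, div_mul_cancel₀ _ (by positivity)]
    _ ≤ δ * m * a ^ n + δ * ∫ y, r y ^ n ∂μ := by gcongr
    _ ≤ 2 * δ * ∫ y, r y ^ n ∂μ := by nlinarith

end Concentration

theorem Complex.normSq_one_add_of_norm_eq_one {z : ℂ} (hz : ‖z‖ = 1) :
    Complex.normSq (1 + z) = 4 - Complex.normSq (1 - z) := by
  have : Complex.normSq z = 1 := by rw [Complex.normSq_eq_norm_sq, hz, one_pow]
  rw [Complex.normSq_add, Complex.normSq_sub, this, Complex.normSq_one]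
  ring

def unitaryCharacters (G : Type*) [MulOneClass G] [TopologicalSpace G] : Submonoid (G →* ℂ) where
  carrier := {χ | Continuous χ ∧ ∀ x, ‖χ x‖ = 1}
  mul_mem' hχ hψ := ⟨hχ.1.mul hψ.1, fun x => by simp [hχ.2 x, hψ.2 x]⟩
  one_mem' := ⟨continuous_const, fun x => by simp⟩

def trigPolynomials (G : Type*) [MulOneClass G] [TopologicalSpace G] : Subalgebra ℂ (G → ℂ) :=
  Algebra.adjoin ℂ ((unitaryCharacters G).map (MonoidHom.coeFn G ℂ))

section CharKernel

variable {G : Type*} [MulOneClass G]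

noncomputable def charKernel (S : Finset (G →* ℂ)) (y : G) : ℝ :=
  1 + ∑ χ ∈ S, Complex.normSq (1 + χ y)

theorem charKernel_pos (S : Finset (G →* ℂ)) (y : G) : 0 < charKernel S y :=
  add_pos_of_pos_of_nonneg one_pos (Finset.sum_nonneg fun _ _ => Complex.normSq_nonneg _)

theorem charKernel_eq_charKernel_one_sub {S : Finset (G →* ℂ)} (hS : ∀ χ ∈ S, ∀ x, ‖χ x‖ = 1)
    (y : G) : charKernel S y = charKernel S 1 - ∑ χ ∈ S, Complex.normSq (1 - χ y) := by
  unfold charKernel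
  rw [Finset.sum_congr rfl fun χ hχ => Complex.normSq_one_add_of_norm_eq_one (hS χ hχ y),
    Finset.sum_congr rfl fun χ hχ => Complex.normSq_one_add_of_norm_eq_one (hS χ hχ 1)]
  simp only [map_one, sub_self, Complex.normSq_zero, Finset.sum_sub_distrib, Finset.sum_const,
    nsmul_eq_mul]
  ring

theorem charKernel_lt_charKernel_one {S : Finset (G →* ℂ)} (hS : ∀ χ ∈ S, ∀ x, ‖χ x‖ = 1)
    {y : G} (hy : ∃ χ ∈ S, χ y ≠ 1) : charKernel S y < charKernel S 1 := by
  obtain ⟨χ, hχ, hχy⟩ := hy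
  have hpos : 0 < ∑ χ ∈ S, Complex.normSq (1 - χ y) :=
    Finset.sum_pos' (fun _ _ => Complex.normSq_nonneg _)
      ⟨χ, hχ, Complex.normSq_pos.2 (sub_ne_zero.2 hχy.symm)⟩
  rw [charKernel_eq_charKernel_one_sub hS y]
  linarith

theorem continuous_charKernel [TopologicalSpace G] {S : Finset (G →* ℂ)}
    (hS : ∀ χ ∈ S, Continuous χ) : Continuous (charKernel S) :=
  continuous_const.add <| continuous_finsetSum _ fun χ hχ =>
    Complex.continuous_normSq.comp (continuous_const.add (hS χ hχ))

end CharKernel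

section TrigPolynomials

variable {G : Type*} [MulOneClass G] [TopologicalSpace G]

theorem coe_mem_trigPolynomials {χ : G →* ℂ} (hχ : χ ∈ unitaryCharacters G) :
    ⇑χ ∈ trigPolynomials G :=
  Algebra.subset_adjoin ⟨χ, hχ, rfl⟩

theorem star_coe_mem_trigPolynomials {χ : G →* ℂ} (hχ : χ ∈ unitaryCharacters G) :
    star ⇑χ ∈ trigPolynomials G :=
  coe_mem_trigPolynomials (χ := (starRingEnd ℂ).toMonoidHom.comp χ)
    ⟨Complex.continuous_conj.comp hχ.1, fun x => by simp [hχ.2 x]⟩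

theorem exists_finset_sum_eq_of_mem_trigPolynomials {F : G → ℂ} (hF : F ∈ trigPolynomials G) :
    ∃ (s : Finset (G →* ℂ)) (c : (G →* ℂ) → ℂ),
      (∀ χ ∈ s, Continuous χ ∧ ∀ x, ‖χ x‖ = 1) ∧ ∀ g, F g = ∑ χ ∈ s, c χ * χ g := by
  rw [← Subalgebra.mem_toSubmodule, trigPolynomials, Algebra.adjoin_eq_span,
    Submonoid.closure_eq, Submonoid.coe_map, Finsupp.mem_span_image_iff_linearCombination] at hF
  obtain ⟨l, hl, rfl⟩ := hF
  refine ⟨l.support, l, fun χ hχ => (Finsupp.mem_supported _ _).1 hl hχ, fun g => ?_⟩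
  simp [Finsupp.linearCombination_apply, Finsupp.sum]

theorem charKernel_pow_mem_trigPolynomials {S : Finset (G →* ℂ)}
    (hS : ∀ χ ∈ S, χ ∈ unitaryCharacters G) (n : ℕ) :
    (fun y => (charKernel S y : ℂ) ^ n) ∈ trigPolynomials G := by
  have hker : (fun y => (charKernel S y : ℂ)) = 1 + ∑ χ ∈ S, (1 + ⇑χ) * star (1 + ⇑χ) := by
    ext y
    simp [charKernel, ← Complex.mul_conj]
  refine pow_mem (hker ▸ add_mem (one_mem _) (Subalgebra.sum_mem _ fun χ hχ => ?_)) n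
  rw [star_add, star_one]
  exact mul_mem (add_mem (one_mem _) (coe_mem_trigPolynomials (hS χ hχ)))
    (add_mem (one_mem _) (star_coe_mem_trigPolynomials (hS χ hχ)))

end TrigPolynomials

theorem exists_finset_unitaryCharacters_ne_one {G : Type*} [Group G] [TopologicalSpace G]
    {K : Set G} (hK : IsCompact K) (h1K : (1 : G) ∉ K)
    (hsep : ∀ g : G, g ≠ 1 → ∃ χ : G →* ℂ, Continuous χ ∧ (∀ x, ‖χ x‖ = 1) ∧ χ g ≠ 1) :
    ∃ S : Finset (G →* ℂ), (∀ χ ∈ S, χ ∈ unitaryCharacters G) ∧ ∀ y ∈ K, ∃ χ ∈ S, χ y ≠ 1 := by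
  have hcover : K ⊆ ⋃ χ ∈ (unitaryCharacters G : Set (G →* ℂ)), {y | χ y ≠ 1} := by
    intro y hy
    obtain ⟨χ, hχc, hχn, hχy⟩ := hsep y (ne_of_mem_of_not_mem hy h1K)
    exact Set.mem_biUnion (x := χ) ⟨hχc, hχn⟩ hχy
  obtain ⟨T, hTU, hT, hKT⟩ := hK.elim_finite_subcover_image
    (fun χ hχ => isOpen_ne_fun hχ.1 continuous_const) hcover
  refine ⟨hT.toFinset, fun χ hχ => hTU (hT.mem_toFinset.1 hχ), fun y hy => ?_⟩
  obtain ⟨χ, hχ, hχy⟩ := Set.mem_iUnion₂.1 (hKT hy)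
  exact ⟨χ, hT.mem_toFinset.2 hχ, hχy⟩

theorem stmt15_general {G : Type*} [CommGroup G] [TopologicalSpace G]
    [CompactSpace G] [MeasurableSpace G] [BorelSpace G]
    (μ : Measure G) [μ.IsHaarMeasure]
    (hsep : ∀ g : G, g ≠ 1 → ∃ χ : G →* ℂ, Continuous χ ∧ (∀ x, ‖χ x‖ = 1) ∧ χ g ≠ 1)
    (f : C(G, ℂ)) (hf : f 1 = 0) (ε : ℝ) (hε : 0 < ε) :
    ∃ (s : Finset (G →* ℂ)) (c : (G →* ℂ) → ℂ) (φ : G → ℝ),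
      (∀ χ ∈ s, Continuous χ ∧ ∀ x, ‖χ x‖ = 1) ∧
      (∀ g : G, (φ g : ℂ) = ∑ χ ∈ s, c χ * χ g) ∧
      (∀ g : G, 0 ≤ φ g) ∧
      (∫ g, φ g ∂μ) = 1 ∧
      (∫ g, φ g * ‖f g‖ ∂μ) ≤ ε := by
  set K := {g | ε / 2 ≤ ‖f g‖}
  have h1K : (1 : G) ∉ K := by simp [K, hf, hε]
  obtain ⟨S, hSU, hSK⟩ := exists_finset_unitaryCharacters_ne_one
    (isClosed_le continuous_const (by fun_prop)).isCompact h1K hsep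
  obtain ⟨n, hpos, hle⟩ := exists_integral_pow_mul_le (μ := μ)
    (continuous_charKernel fun χ hχ => (hSU χ hχ).1) (fun y => (charKernel_pos S y).le)
    (by fun_prop : Continuous fun g => ‖f g‖) (fun _ => norm_nonneg _) (charKernel_pos S 1)
    (half_pos hε) fun y hy => charKernel_lt_charKernel_one (fun χ hχ => (hSU χ hχ).2) (hSK y hy)
  obtain ⟨s, c, hs, hrep⟩ :=
    exists_finset_sum_eq_of_mem_trigPolynomials (charKernel_pow_mem_trigPolynomials hSU n)
  set C := ∫ y, charKernel S y ^ n ∂μ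
  refine ⟨s, fun χ => c χ / C, fun g => charKernel S g ^ n / C, hs, fun g => ?_,
    fun g => div_nonneg (pow_nonneg (charKernel_pos S g).le n) hpos.le, ?_, ?_⟩
  · push_cast
    rw [hrep g, Finset.sum_div]
    simp only [mul_div_right_comm]
  · rw [integral_div, div_self hpos.ne']
  · simp only [div_mul_eq_mul_div]
    rw [integral_div, div_le_iff₀ hpos]
    linarith

/-- Fejér-type lemma: on a compact Hausdorff abelian group `G` whose continuous
characters separate points, with Haar probability measure `λ`, for every continuous
`f : G → ℂ` with `f(1) = 0` and every `ε > 0` there is a nonnegative real-valued finite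
linear combination `φ` of continuous characters with `∫ φ dλ = 1` and `∫ φ |f| dλ ≤ ε`. -/
theorem stmt15 {G : Type*} [CommGroup G] [TopologicalSpace G] [IsTopologicalGroup G]
    [CompactSpace G] [T2Space G] [MeasurableSpace G] [BorelSpace G]
    (μ : Measure G) [μ.IsHaarMeasure] [IsProbabilityMeasure μ]
    (hsep : ∀ g : G, g ≠ 1 → ∃ χ : G →* ℂ, Continuous χ ∧ (∀ x, ‖χ x‖ = 1) ∧ χ g ≠ 1)
    (f : C(G, ℂ)) (hf : f 1 = 0) (ε : ℝ) (hε : 0 < ε) :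
    ∃ (s : Finset (G →* ℂ)) (c : (G →* ℂ) → ℂ) (φ : G → ℝ),
      (∀ χ ∈ s, Continuous χ ∧ ∀ x, ‖χ x‖ = 1) ∧
      (∀ g : G, (φ g : ℂ) = ∑ χ ∈ s, c χ * χ g) ∧
      (∀ g : G, 0 ≤ φ g) ∧
      (∫ g, φ g ∂μ) = 1 ∧
      (∫ g, φ g * ‖f g‖ ∂μ) ≤ ε :=
  stmt15_general μ hsep f hf ε hε
end

section
/- Let d ≥ 1 and let l be a continuous length function on the d-torus 𝕌^d, where 𝕌 = {z ∈ ℂ : |z| = 1} with coordinatewise multiplication. Then for every p ∈ ℤ^d there exists a constant C ≥ 0 such that |1 − ω^p| ≤ C·l(ω) for all ω ∈ 𝕌^d, where ω^p = ∏_{i=1}^d ω_i^{p_i}; equivalently, sup{ |1 − ω^p| / l(ω) : ω ∈ 𝕌^d, ω ≠ (1,…,1) } < ∞. -/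
/-!
Let `χ(ω) = ω^p` and write `χ(ω) = z = e^{iθ}` with `0 < |θ| ≤ π`. For `n = ⌈π / (2|θ|)⌉` the
angle `n|θ|` lies in `[π/2, 3π/2]`, so `Re zⁿ ≤ 0` and `ωⁿ` falls into the compact set
`K = {ω | 1 ≤ |1 - χ ω|}`, on which the continuous length function is bounded below by some
`ε > 0`. Hence `ε ≤ l(ωⁿ) ≤ n l(ω)`, while `n |1 - z| ≤ n|θ| ≤ 3π/2`, giving
`|1 - z| ≤ 3π / (2ε) · l(ω)`.
-/

open Real

lemma Complex.one_le_norm_one_sub_of_re_nonpos {w : ℂ} (hw : w.re ≤ 0) : 1 ≤ ‖1 - w‖ :=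
  calc (1 : ℝ) ≤ (1 - w).re := by simp only [Complex.sub_re, Complex.one_re]; linarith
    _ ≤ ‖1 - w‖ := Complex.re_le_norm _

namespace Circle

lemma norm_one_sub_le_abs_arg (z : Circle) : ‖1 - (z : ℂ)‖ ≤ |Complex.arg z| := by
  conv_lhs => rw [← exp_arg z, coe_exp, norm_sub_rev, mul_comm]
  simpa using Real.norm_exp_I_mul_ofReal_sub_one_le (x := Complex.arg z)

lemma re_pow_eq_cos (z : Circle) (n : ℕ) :
    ((z : ℂ) ^ n).re = Real.cos (n * Complex.arg z) := by
  conv_lhs =>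
    rw [← coe_pow, ← exp_arg z, ← exp_natCast_mul, coe_exp, Complex.exp_ofReal_mul_I_re]

theorem exists_pow_one_le_norm_one_sub (z : Circle) (hz : z ≠ 1) :
    ∃ n : ℕ, 1 ≤ ‖1 - (z : ℂ) ^ n‖ ∧ n * ‖1 - (z : ℂ)‖ ≤ 3 * π / 2 := by
  set θ := |Complex.arg z|
  have hθ : 0 < θ := abs_pos.2 (arg_eq_zero.not.2 hz)
  have hθπ : θ ≤ π := Complex.abs_arg_le_pi z
  set n := ⌈π / (2 * θ)⌉₊
  have hlo : π / 2 ≤ n * θ := by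
    have := Nat.le_ceil (π / (2 * θ))
    rw [div_le_iff₀ (by positivity)] at this
    linarith
  have hhi : n * θ ≤ 3 * π / 2 := by
    have := Nat.ceil_lt_add_one (by positivity : 0 ≤ π / (2 * θ))
    have : (n : ℝ) * θ < (π / (2 * θ) + 1) * θ := mul_lt_mul_of_pos_right this hθ
    rw [add_mul, div_mul_eq_mul_div, mul_div_mul_right _ _ hθ.ne'] at this
    linarith
  refine ⟨n, Complex.one_le_norm_one_sub_of_re_nonpos ?_, ?_⟩
  · rw [re_pow_eq_cos, ← Real.cos_abs, abs_mul, Nat.abs_cast]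
    exact Real.cos_nonpos_of_pi_div_two_le_of_le hlo (by linarith)
  · calc n * ‖1 - (z : ℂ)‖ ≤ n * θ := by gcongr; exact norm_one_sub_le_abs_arg z
      _ ≤ 3 * π / 2 := hhi

end Circle

lemma GroupSeminorm.map_pow_le_mul {G : Type*} [Group G] (f : GroupSeminorm G) (x : G) (n : ℕ) :
    f (x ^ n) ≤ n * f x := by
  induction n with
  | zero => simp
  | succ n ih =>
    calc f (x ^ (n + 1)) ≤ f (x ^ n) + f x := by rw [pow_succ]; exact map_mul_le_add f _ _
      _ ≤ (n + 1 : ℕ) * f x := by push_cast; linarith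

theorem exists_norm_one_sub_le_mul_groupSeminorm {G : Type*} [Group G] [TopologicalSpace G]
    [CompactSpace G] (χ : G →* Circle) (hχ : Continuous χ) (f : GroupSeminorm G)
    (hf : Continuous f) (hker : ∀ x, f x = 0 → χ x = 1) :
    ∃ C : ℝ, 0 ≤ C ∧ ∀ x, ‖1 - (χ x : ℂ)‖ ≤ C * f x := by
  set K := {x | 1 ≤ ‖1 - (χ x : ℂ)‖}
  have hK : IsCompact K := (isClosed_le continuous_const (by fun_prop)).isCompact
  have hfK : ∀ x ∈ K, 0 < f x := fun x hx =>
    (apply_nonneg f x).lt_of_ne' fun h0 => by norm_num [K, hker x h0] at hx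
  obtain ⟨ε, hε, hεK⟩ := hK.exists_forall_le' hf.continuousOn hfK
  refine ⟨3 * π / (2 * ε), by positivity, fun x => ?_⟩
  by_cases hx : χ x = 1
  · simpa [hx] using mul_nonneg (by positivity : 0 ≤ 3 * π / (2 * ε)) (apply_nonneg f x)
  obtain ⟨n, hnK, hn⟩ := (χ x).exists_pow_one_le_norm_one_sub hx
  have hεn : ε ≤ n * f x :=
    (hεK (x ^ n) (by simpa [K] using hnK)).trans (f.map_pow_le_mul x n)
  rw [div_mul_eq_mul_div, le_div_iff₀ (by positivity)]
  calc ‖1 - (χ x : ℂ)‖ * (2 * ε) ≤ ‖1 - (χ x : ℂ)‖ * (2 * (n * f x)) := by gcongr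
    _ = 2 * (n * ‖1 - (χ x : ℂ)‖) * f x := by ring
    _ ≤ 2 * (3 * π / 2) * f x := by gcongr
    _ = 3 * π * f x := by ring

noncomputable def torusCharacter {ι : Type*} [Fintype ι] (p : ι → ℤ) :
    (ι → Circle) →* Circle where
  toFun ω := ∏ i, ω i ^ p i
  map_one' := by simp
  map_mul' ω η := by simp only [Pi.mul_apply, mul_zpow, Finset.prod_mul_distrib]

lemma continuous_torusCharacter {ι : Type*} [Fintype ι] (p : ι → ℤ) :
    Continuous (torusCharacter p) :=
  continuous_finsetProd _ fun i _ => (continuous_zpow (p i)).comp (continuous_apply i)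

lemma coe_torusCharacter {ι : Type*} [Fintype ι] (p : ι → ℤ) (ω : ι → Circle) :
    (torusCharacter p ω : ℂ) = ∏ i, (ω i : ℂ) ^ p i :=
  map_prod Circle.coeHom _ _

theorem stmt17_general (d : ℕ)
    (l : (Fin d → Circle) → ℝ) (hcont : Continuous l)
    (hsub : ∀ x y, l (x * y) ≤ l x + l y)
    (hinv : ∀ x, l x⁻¹ = l x)
    (hzero : ∀ x, l x = 0 ↔ x = 1)
    (p : Fin d → ℤ) :
    ∃ C : ℝ, 0 ≤ C ∧
      ∀ ω : Fin d → Circle, ‖(1 : ℂ) - ∏ i, ((ω i : ℂ) ^ (p i))‖ ≤ C * l ω := by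
  let L : GroupSeminorm (Fin d → Circle) :=
    { toFun := l, map_one' := (hzero 1).2 rfl, mul_le' := hsub, inv' := hinv }
  obtain ⟨C, hC, hbound⟩ := exists_norm_one_sub_le_mul_groupSeminorm (torusCharacter p)
    (continuous_torusCharacter p) L hcont fun ω hω => by rw [(hzero ω).1 hω, map_one]
  exact ⟨C, hC, fun ω => coe_torusCharacter p ω ▸ hbound ω⟩

/-- For any continuous length function `l` on the `d`-torus `𝕌^d` and any `p ∈ ℤ^d`,
there is a constant `C ≥ 0` with `|1 − ω^p| ≤ C · l(ω)` for all `ω ∈ 𝕌^d`. -/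
theorem stmt17 (d : ℕ) (hd : 1 ≤ d)
    (l : (Fin d → Circle) → ℝ) (hcont : Continuous l)
    (hnonneg : ∀ x, 0 ≤ l x)
    (hsub : ∀ x y, l (x * y) ≤ l x + l y)
    (hinv : ∀ x, l x⁻¹ = l x)
    (hzero : ∀ x, l x = 0 ↔ x = 1)
    (p : Fin d → ℤ) :
    ∃ C : ℝ, 0 ≤ C ∧
      ∀ ω : Fin d → Circle, ‖(1 : ℂ) - ∏ i, ((ω i : ℂ) ^ (p i))‖ ≤ C * l ω :=
  stmt17_general d l hcont hsub hinv hzero p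
end

section
/- Let G be a compact Hausdorff topological group, let ρ be a metric on G inducing the topology of G, and let λ be the Haar probability measure on G. Then the function l : G → ℝ defined by l(x) = ∫_G ρ(gx, g) dλ(g) is a continuous length function on G: l is continuous, l(xy) ≤ l(x) + l(y) for all x,y ∈ G, l(x⁻¹) = l(x) for all x ∈ G, and l(x) = 0 if and only if x is the identity element of G. -/
/-!
Right invariance of Haar measure, automatic on a compact group because Haar measure is unique up
to scaling and has finite nonzero total mass, allows the substitution `g ↦ g * x` in the integral.
It turns the triangle inequality `d(gxy, g) ≤ d(gxy, gx) + d(gx, g)` into subadditivity and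
`d(gx⁻¹, g)` into `d(g, gx)`. If the integral vanishes, the continuous nonnegative integrand
vanishes everywhere because Haar measure charges every nonempty open set; at `g = 1` this gives
`x = 1`.
-/

open MeasureTheory Measure

theorem MeasureTheory.Measure.IsHaarMeasure.isMulRightInvariant_of_compactSpace {G : Type*}
    [Group G] [TopologicalSpace G] [IsTopologicalGroup G] [CompactSpace G]
    [MeasurableSpace G] [BorelSpace G] (μ : Measure G) [μ.IsHaarMeasure] :
    μ.IsMulRightInvariant := by
  refine ⟨fun g ↦ ?_⟩
  have hmap : μ.map (· * g) = haarScalarFactor (μ.map (· * g)) μ • μ :=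
    isMulInvariant_eq_smul_of_compactSpace _ μ
  have hmass : μ Set.univ = haarScalarFactor (μ.map (· * g)) μ • μ Set.univ := by
    rw [← Measure.smul_apply, ← hmap, map_apply (measurable_mul_const g) MeasurableSet.univ,
      Set.preimage_univ]
  have hfactor : haarScalarFactor (μ.map (· * g)) μ = 1 := by
    rw [ENNReal.smul_def, smul_eq_mul] at hmass
    exact_mod_cast (ENNReal.mul_eq_right (measure_univ_ne_zero.mpr (NeZero.ne μ))
      (measure_ne_top μ Set.univ)).mp hmass.symm
  rw [hmap, hfactor, one_smul]

section MeanDisplacement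

variable {G : Type*} [Group G] [MeasurableSpace G]

noncomputable def meanDisplacement [PseudoMetricSpace G] (μ : Measure G) (x : G) : ℝ :=
  ∫ g, dist (g * x) g ∂μ

theorem meanDisplacement_inv [PseudoMetricSpace G] [MeasurableMul G] (μ : Measure G)
    [μ.IsMulRightInvariant] (x : G) : meanDisplacement μ x⁻¹ = meanDisplacement μ x := by
  rw [meanDisplacement, ← integral_mul_right_eq_self _ x]
  simp only [mul_inv_cancel_right, dist_comm _ (_ * x), meanDisplacement]

variable [PseudoMetricSpace G] [ContinuousMul G] [CompactSpace G] [OpensMeasurableSpace G]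
  (μ : Measure G) [IsFiniteMeasure μ]

theorem integrable_dist_mul_right_self (x : G) : Integrable (fun g ↦ dist (g * x) g) μ :=
  ((continuous_mul_const x).dist continuous_id).integrable_of_hasCompactSupport
    (HasCompactSupport.of_compactSpace _)

theorem continuous_meanDisplacement : Continuous (meanDisplacement μ) := by
  have hcont : Continuous (Function.uncurry fun (x g : G) ↦ dist (g * x) g) := by fun_prop
  show Continuous fun x ↦ ∫ g, dist (g * x) g ∂μ
  simpa only [Measure.restrict_univ] using
    continuous_parametric_integral_of_continuous (μ := μ) hcont isCompact_univ

theorem meanDisplacement_mul_le [MeasurableMul G] [μ.IsMulRightInvariant] (x y : G) :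
    meanDisplacement μ (x * y) ≤ meanDisplacement μ x + meanDisplacement μ y := by
  have hy : ∫ g, dist (g * x * y) (g * x) ∂μ = meanDisplacement μ y :=
    integral_mul_right_eq_self (fun g ↦ dist (g * y) g) x
  have hint_y : Integrable (fun g ↦ dist (g * x * y) (g * x)) μ :=
    (integrable_dist_mul_right_self μ y).comp_mul_right x
  calc meanDisplacement μ (x * y)
      ≤ ∫ g, (dist (g * x * y) (g * x) + dist (g * x) g) ∂μ := by
        refine integral_mono (integrable_dist_mul_right_self μ (x * y))
          (hint_y.add (integrable_dist_mul_right_self μ x)) fun g ↦ ?_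
        simpa only [mul_assoc] using dist_triangle (g * (x * y)) (g * x) g
    _ = meanDisplacement μ y + meanDisplacement μ x := by
        rw [integral_add hint_y (integrable_dist_mul_right_self μ x), hy]; rfl
    _ = meanDisplacement μ x + meanDisplacement μ y := add_comm _ _

end MeanDisplacement

theorem meanDisplacement_eq_zero_iff {G : Type*} [Group G] [MeasurableSpace G] [MetricSpace G]
    [ContinuousMul G] [CompactSpace G] [OpensMeasurableSpace G] (μ : Measure G)
    [IsFiniteMeasure μ] [μ.IsOpenPosMeasure] {x : G} : meanDisplacement μ x = 0 ↔ x = 1 := by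
  refine ⟨fun hx ↦ ?_, fun hx ↦ by simp [hx, meanDisplacement]⟩
  have hae : (fun g ↦ dist (g * x) g) =ᵐ[μ] 0 :=
    (integral_eq_zero_iff_of_nonneg (fun _ ↦ dist_nonneg)
      (integrable_dist_mul_right_self μ x)).mp hx
  have hzero : (fun g ↦ dist (g * x) g) = 0 :=
    (Continuous.ae_eq_iff_eq μ ((continuous_mul_const x).dist continuous_id)
      continuous_const).mp hae
  simpa using congrFun hzero 1

theorem stmt18_general {G : Type*} [Group G] [MetricSpace G] [IsTopologicalGroup G]
    [CompactSpace G] [MeasurableSpace G] [BorelSpace G]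
    (μ : Measure G) [μ.IsHaarMeasure]
    (l : G → ℝ) (hl : ∀ x, l x = ∫ g, dist (g * x) g ∂μ) :
    Continuous l ∧
    (∀ x y : G, l (x * y) ≤ l x + l y) ∧
    (∀ x : G, l x⁻¹ = l x) ∧
    (∀ x : G, l x = 0 ↔ x = 1) := by
  obtain rfl : l = meanDisplacement μ := funext hl
  have := IsHaarMeasure.isMulRightInvariant_of_compactSpace μ
  exact ⟨continuous_meanDisplacement μ, meanDisplacement_mul_le μ, meanDisplacement_inv μ,
    fun _ ↦ meanDisplacement_eq_zero_iff μ⟩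

/-- For a compact metrizable group `G` with Haar probability measure `μ`, the function
`l(x) = ∫ dist(gx, g) dμ(g)` is a continuous length function on `G`. -/
theorem stmt18 {G : Type*} [Group G] [MetricSpace G] [IsTopologicalGroup G]
    [CompactSpace G] [MeasurableSpace G] [BorelSpace G]
    (μ : Measure G) [μ.IsHaarMeasure] [IsProbabilityMeasure μ]
    (l : G → ℝ) (hl : ∀ x, l x = ∫ g, dist (g * x) g ∂μ) :
    Continuous l ∧
    (∀ x y : G, l (x * y) ≤ l x + l y) ∧
    (∀ x : G, l x⁻¹ = l x) ∧
    (∀ x : G, l x = 0 ↔ x = 1) :=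
  stmt18_general μ l hl
end
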